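/- Closed-form matrix expression for the mean first passage time with unit inter-arrival times: for every g ∈ G with g ≠ 1, the matrix I − P_{[g]} is invertible and d(g) = ( P_{[g]} · (I − P_{[g]})⁻² )_{1,g}. -/

import Mathlib

open MeasureTheory
open scoped ENNReal

/-- Discrete measurable structure on the elements of a finset. -/
instance fintypeStepSpace {α : Type*} (S : Finset α) : MeasurableSpace S := ⊤

/-- The right random walk on the Cayley graph of `(G,S)` started at the identity:
`W_0(ω) = 1` and `W_n(ω) = ω(0)·ω(1)⋯ω(n−1)`. -/
def walk {G : Type*} [Group G] (S : Finset G) (ω : ℕ → S) (n : ℕ) : G :=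
  (List.ofFn fun i : Fin n => (ω i : G)).prod

/-- The first passage time `τ_g(ω) = inf { n : ℕ | W_n(ω) = g }`, valued in `ℕ∞`
(in particular it is `⊤` if the walk never reaches `g`). -/
noncomputable def tau {G : Type*} [Group G] (S : Finset G) (g : G) (ω : ℕ → S) : ℕ∞ :=
  sInf ((Nat.cast : ℕ → ℕ∞) '' {n : ℕ | walk S ω n = g})

/-- `μ` is the infinite product over `ℕ` of the uniform probability measure on `S`:
a probability measure giving each cylinder set on the first `n` coordinates
probability `|S|⁻ⁿ`.  (These conditions determine the product measure uniquely.) -/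
def IsUniformProductMeasure {G : Type*} [Group G] (S : Finset G)
    (μ : Measure (ℕ → S)) : Prop :=
  IsProbabilityMeasure μ ∧
    ∀ (n : ℕ) (w : Fin n → S),
      μ {ω | ∀ i : Fin n, ω (i : ℕ) = w i} = ((S.card : ℝ≥0∞))⁻¹ ^ n

/-- The mean first passage time `d(g) = ∫ τ_g dμ`, valued in `[0,∞]`. -/
noncomputable def mfpt {G : Type*} [Group G] (S : Finset G) (μ : Measure (ℕ → S))
    (g : G) : ℝ≥0∞ :=
  ∫⁻ ω, (tau S g ω : ℝ≥0∞) ∂μ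

/-- The transition matrix of the uniform random walk on the Cayley graph:
`P(x,y) = 1/|S|` if `x⁻¹·y ∈ S` and `0` otherwise. -/
noncomputable def transMat {G : Type*} [Group G] [DecidableEq G] (S : Finset G) :
    Matrix G G ℝ :=
  Matrix.of fun x y => if x⁻¹ * y ∈ S then ((S.card : ℝ))⁻¹ else 0

/-- `A` with row `g` replaced by zeros, making `g` an absorbing state. -/
def absorb {G : Type*} [DecidableEq G] (g : G) (A : Matrix G G ℝ) : Matrix G G ℝ :=
  Matrix.of fun x y => if x = g then 0 else A x y

section Auxiliary

open Finset
open scoped Classical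

private lemma walk_zero {G : Type*} [Group G] (S : Finset G) (ω : ℕ → S) : walk S ω 0 = 1 := by
  simp [walk]

private lemma walk_succ {G : Type*} [Group G] (S : Finset G) (ω : ℕ → S) (n : ℕ) :
    walk S ω (n + 1) = (ω 0 : G) * walk S (fun i => ω (i + 1)) n := by
  simp [walk, List.ofFn_succ]

private lemma walk_congr {G : Type*} [Group G] (S : Finset G) {ω ω' : ℕ → S} {n : ℕ}
    (h : ∀ i < n, ω i = ω' i) : walk S ω n = walk S ω' n := by
  unfold walk
  have : (fun i : Fin n => ((ω i : G))) = fun i : Fin n => ((ω' i : G)) :=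
    funext fun i => by rw [h i i.isLt]
  rw [this]

private def pad {α : Type*} (s0 : α) {n : ℕ} (w : Fin n → α) : ℕ → α :=
  fun i => if h : i < n then w ⟨i, h⟩ else s0

private lemma pad_lt {α : Type*} (s0 : α) {n : ℕ} (w : Fin n → α) {i : ℕ} (h : i < n) :
    pad s0 w i = w ⟨i, h⟩ := dif_pos h

private lemma walk_pad_cons {G : Type*} [Group G] (S : Finset G) (s0 : S) {n : ℕ}
    (s : S) (w : Fin n → S) {k : ℕ} (hk : k ≤ n) :
    walk S (pad s0 (Fin.cons s w)) (k + 1) = (s : G) * walk S (pad s0 w) k := by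
  rw [walk_succ]
  have h0 : pad s0 (Fin.cons s w) 0 = s := by
    rw [pad_lt s0 _ (Nat.succ_pos n)]; exact Fin.cons_zero _ _
  rw [h0]
  congr 1
  refine walk_congr S fun i hi => ?_
  have hin : i < n := lt_of_lt_of_le hi hk
  rw [pad_lt s0 _ (Nat.succ_lt_succ hin), pad_lt s0 _ hin]
  have : (⟨i + 1, Nat.succ_lt_succ hin⟩ : Fin (n+1)) = Fin.succ ⟨i, hin⟩ := rfl
  rw [this, Fin.cons_succ]

private noncomputable def Fset {G : Type*} [Group G] [Fintype G] [DecidableEq G]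
    (S : Finset G) (g : G) (s0 : S) (n : ℕ) (x y : G) : Finset (Fin n → S) :=
  Finset.univ.filter fun w =>
    (∀ k, 0 < k → k < n → x * walk S (pad s0 w) k ≠ g) ∧ x * walk S (pad s0 w) n = y

private lemma pow_absorb_row {G : Type*} [Group G] [Fintype G] [DecidableEq G]
    (S : Finset G) (g : G) {n : ℕ} (hn : 0 < n) (y : G) :
    ((absorb g (transMat S)) ^ n) g y = 0 := by
  obtain ⟨m, rfl⟩ : ∃ m, n = m + 1 := ⟨n - 1, (Nat.succ_pred_eq_of_pos hn).symm⟩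
  rw [pow_succ', Matrix.mul_apply]
  refine Finset.sum_eq_zero fun z _ => ?_
  have : absorb g (transMat S) g z = 0 := if_pos rfl
  rw [this, zero_mul]

private lemma card_filter_cons {α : Type*} [Fintype α] [DecidableEq α] (n : ℕ)
    (A : Finset (Fin (n+1) → α)) :
    A.card = ∑ s : α, (Finset.univ.filter fun w : Fin n → α => Fin.cons s w ∈ A).card := by
  have hrw : A =
      Finset.univ.biUnion (fun s : α =>
        ((Finset.univ.filter fun w : Fin n → α => Fin.cons s w ∈ A).image (Fin.cons s))) := by
    ext w
    constructor
    · intro hw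
      refine Finset.mem_biUnion.2 ⟨w 0, Finset.mem_univ _,
        Finset.mem_image.2 ⟨Fin.tail w, ?_, Fin.cons_self_tail w⟩⟩
      rw [Finset.mem_filter]
      exact ⟨Finset.mem_univ _, by rw [Fin.cons_self_tail]; exact hw⟩
    · intro hw
      obtain ⟨s, -, hw⟩ := Finset.mem_biUnion.1 hw
      obtain ⟨w', hw', rfl⟩ := Finset.mem_image.1 hw
      exact (Finset.mem_filter.1 hw').2
  nth_rewrite 1 [hrw]
  rw [Finset.card_biUnion]
  · refine Finset.sum_congr rfl fun s _ => ?_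
    exact Finset.card_image_of_injective _ (Fin.cons_right_injective (α := fun _ => α) s)
  · intro s _ t _ hst
    simp only [Finset.disjoint_left, Finset.mem_image]
    rintro a ⟨w, -, rfl⟩ ⟨w', -, hw'⟩
    refine hst ?_
    have := congrArg (fun f => f 0) hw'
    simpa using this.symm

private lemma powEntry {G : Type*} [Group G] [Fintype G] [DecidableEq G]
    (S : Finset G) (g : G) (s0 : S) :
    ∀ (n : ℕ) (x y : G), x ≠ g →
      ((absorb g (transMat S)) ^ n) x y * (S.card : ℝ) ^ n
        = ((Fset S g s0 n x y).card : ℝ) := by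
  intro n
  induction n with
  | zero =>
      intro x y _
      rw [pow_zero, pow_zero, mul_one, Matrix.one_apply]
      have h : Fset S g s0 0 x y = if x = y then Finset.univ else ∅ := by
        ext w
        by_cases hxy : x = y <;>
          simp [Fset, walk_zero, hxy]
      rw [h]
      by_cases hxy : x = y <;> simp [hxy]
  | succ n ih =>
      intro x y hx
      have hc0 : (0:ℝ) < (S.card : ℝ) := by
        have : 0 < S.card := Finset.card_pos.2 ⟨(s0 : G), s0.2⟩
        exact_mod_cast this
      have hQx : ∀ z, (absorb g (transMat S)) x z
          = if x⁻¹ * z ∈ S then (S.card : ℝ)⁻¹ else 0 := by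
        intro z; simp [absorb, transMat, hx]
      rw [pow_succ', Matrix.mul_apply, Finset.sum_mul]
      have himg : ∀ z ∈ Finset.univ, z ∉ S.image (fun s => x * s) →
          (absorb g (transMat S)) x z * ((absorb g (transMat S))^n) z y
            * (S.card : ℝ)^(n+1) = 0 := by
        intro z _ hz
        have hmem : x⁻¹ * z ∉ S := fun hmem =>
          hz (Finset.mem_image.2 ⟨x⁻¹ * z, hmem, mul_inv_cancel_left x z⟩)
        rw [hQx z, if_neg hmem, zero_mul, zero_mul]
      rw [← Finset.sum_subset (Finset.subset_univ _) himg,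
        Finset.sum_image (fun a _ b _ h => mul_left_cancel h)]
      have hterm : ∀ s ∈ S,
          (absorb g (transMat S)) x (x * s) * ((absorb g (transMat S))^n) (x * s) y
            * (S.card : ℝ)^(n+1)
          = ((absorb g (transMat S))^n) (x * s) y * (S.card : ℝ)^n := by
        intro s hs
        rw [hQx, inv_mul_cancel_left, if_pos hs, pow_succ]
        field_simp
      rw [Finset.sum_congr rfl hterm]
      have hcc := card_filter_cons n (Fset S g s0 (n+1) x y)
      have hclaim : ∀ s : S,
          (((Finset.univ.filter fun w : Fin n → S =>
              Fin.cons s w ∈ Fset S g s0 (n+1) x y).card : ℝ))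
            = ((absorb g (transMat S))^n) (x * (s:G)) y * (S.card : ℝ)^n := by
        intro s
        have hPc : ∀ w : Fin n → S, (Fin.cons s w ∈ Fset S g s0 (n+1) x y) ↔
            ((∀ j < n, (x * (s:G)) * walk S (pad s0 w) j ≠ g)
              ∧ (x * (s:G)) * walk S (pad s0 w) n = y) := by
          intro w
          rw [Fset, Finset.mem_filter]
          simp only [Finset.mem_univ, true_and]
          constructor
          · rintro ⟨h1, h2⟩
            refine ⟨fun j hj => ?_, ?_⟩
            · have := h1 (j+1) (Nat.succ_pos j) (Nat.succ_lt_succ hj)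
              rwa [walk_pad_cons S s0 s w hj.le, ← mul_assoc] at this
            · rwa [walk_pad_cons S s0 s w le_rfl, ← mul_assoc] at h2
          · rintro ⟨h1, h2⟩
            constructor
            · intro k hk0 hk
              obtain ⟨j, rfl⟩ : ∃ j, k = j + 1 := ⟨k - 1, (Nat.succ_pred_eq_of_pos hk0).symm⟩
              have hjn : j < n := Nat.lt_of_succ_lt_succ hk
              rw [walk_pad_cons S s0 s w hjn.le, ← mul_assoc]
              exact h1 j hjn
            · rw [walk_pad_cons S s0 s w le_rfl, ← mul_assoc]
              exact h2
        by_cases hxs : x * (s:G) = g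
        · cases n with
          | zero =>
              have h : (Finset.univ.filter fun w : Fin 0 → S =>
                  Fin.cons s w ∈ Fset S g s0 1 x y)
                  = if g = y then Finset.univ else ∅ := by
                ext w
                rw [Finset.mem_filter]
                simp only [Finset.mem_univ, true_and, hPc w, walk_zero, mul_one, hxs]
                by_cases hgy : g = y <;> simp [hgy] <;>
                  exact Subsingleton.elim _ _
              rw [h, pow_zero, Matrix.one_apply, hxs]
              by_cases hgy : g = y <;> simp [hgy]
          | succ m =>
              have h : (Finset.univ.filter fun w : Fin (m+1) → S =>
                  Fin.cons s w ∈ Fset S g s0 (m+1+1) x y) = ∅ := by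
                ext w
                simp only [Finset.mem_filter, Finset.mem_univ, true_and,
                  Finset.notMem_empty, iff_false]
                intro hw
                have := ((hPc w).1 hw).1 0 (Nat.succ_pos m)
                rw [walk_zero, mul_one] at this
                exact this hxs
              rw [h, hxs, pow_absorb_row S g (Nat.succ_pos m) y]
              simp
        · have h : (Finset.univ.filter fun w : Fin n → S =>
              Fin.cons s w ∈ Fset S g s0 (n+1) x y)
              = Fset S g s0 n (x * (s:G)) y := by
            ext w
            rw [Finset.mem_filter, hPc w, show (w ∈ Fset S g s0 n (x * (s:G)) y) ↔ _ from by
              rw [Fset, Finset.mem_filter]]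
            simp only [Finset.mem_univ, true_and]
            constructor
            · rintro ⟨h1, h2⟩
              exact ⟨fun k _ hk => h1 k hk, h2⟩
            · rintro ⟨h1, h2⟩
              refine ⟨fun j hj => ?_, h2⟩
              rcases Nat.eq_zero_or_pos j with h0 | hp
              · subst h0; rw [walk_zero, mul_one]; exact hxs
              · exact h1 j hp hj
          rw [h, ← ih (x * (s:G)) y hxs]
      rw [hcc, Nat.cast_sum]
      rw [Finset.sum_congr rfl fun s (_ : s ∈ (Finset.univ : Finset S)) => hclaim s]
      rw [Finset.sum_coe_sort S (fun z => ((absorb g (transMat S))^n) (x * z) y * (S.card : ℝ)^n)]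

private lemma tau_gt_iff {G : Type*} [Group G] (S : Finset G) (g : G) (ω : ℕ → S) (n : ℕ) :
    (n : ℕ∞) < tau S g ω ↔ ∀ k ≤ n, walk S ω k ≠ g := by
  constructor
  · intro h k hk hwalk
    have h1 : tau S g ω ≤ (k : ℕ∞) := sInf_le ⟨k, hwalk, rfl⟩
    have h2 : (n : ℕ∞) < (k : ℕ∞) := lt_of_lt_of_le h h1
    have h3 : n < k := by exact_mod_cast h2
    omega
  · intro h
    have h1 : ((n + 1 : ℕ) : ℕ∞) ≤ tau S g ω := by
      refine le_sInf ?_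
      rintro _ ⟨m, hm, rfl⟩
      have hmn : ¬ m ≤ n := fun hmn => h m hmn hm
      exact_mod_cast Nat.succ_le_of_lt (not_le.1 hmn)
    refine lt_of_lt_of_le ?_ h1
    exact_mod_cast Nat.lt_succ_self n

private lemma enat_cast_tsum (a : ℕ∞) :
    (a : ℝ≥0∞) = ∑' n : ℕ, (if (n : ℕ∞) < a then (1 : ℝ≥0∞) else 0) := by
  induction a using ENat.recTopCoe with
  | top =>
      have : ∀ n : ℕ, (if ((n : ℕ∞) < ⊤) then (1:ℝ≥0∞) else 0) = 1 := fun n =>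
        if_pos (lt_of_le_of_ne le_top (ENat.coe_ne_top n))
      rw [tsum_congr this, ENNReal.tsum_const_eq_top_of_ne_zero one_ne_zero,
        ENat.toENNReal_top]
  | coe m =>
      rw [ENat.toENNReal_coe]
      have hsupp : ∀ n ∉ Finset.range m, (if ((n:ℕ∞) < (m:ℕ∞)) then (1:ℝ≥0∞) else 0) = 0 := by
        intro n hn
        rw [Finset.mem_range, not_lt] at hn
        exact if_neg (by exact_mod_cast not_lt.2 hn)
      rw [tsum_eq_sum hsupp]
      have : ∀ n ∈ Finset.range m, (if ((n:ℕ∞) < (m:ℕ∞)) then (1:ℝ≥0∞) else 0) = 1 := by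
        intro n hn
        rw [Finset.mem_range] at hn
        exact if_pos (by exact_mod_cast hn)
      rw [Finset.sum_congr rfl this, Finset.sum_const, Finset.card_range, nsmul_eq_mul, mul_one]

private lemma cyl_measurable {G : Type*} [Group G] (S : Finset G) {n : ℕ} (w : Fin n → S) :
    MeasurableSet {ω : ℕ → S | ∀ i : Fin n, ω (i : ℕ) = w i} := by
  have h : {ω : ℕ → S | ∀ i : Fin n, ω (i : ℕ) = w i}
      = ⋂ i : Fin n, (fun ω : ℕ → S => ω (i : ℕ)) ⁻¹' {w i} := by
    ext ω; simp [Set.mem_iInter]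
  rw [h]
  exact MeasurableSet.iInter fun i => (measurable_pi_apply (i:ℕ)) trivial

private lemma meas_dep {G : Type*} [Group G] (S : Finset G) {μ : Measure (ℕ → S)}
    (hμ : IsUniformProductMeasure S μ) (n : ℕ) (P : (Fin n → S) → Prop) :
    MeasurableSet {ω : ℕ → S | P (fun i => ω (i : ℕ))} ∧
      μ {ω : ℕ → S | P (fun i => ω (i : ℕ))}
        = ((Finset.univ.filter P).card : ℝ≥0∞) * ((S.card : ℝ≥0∞))⁻¹ ^ n := by
  have hrw : {ω : ℕ → S | P (fun i => ω (i : ℕ))}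
      = ⋃ w ∈ Finset.univ.filter P, {ω : ℕ → S | ∀ i : Fin n, ω (i : ℕ) = w i} := by
    ext ω
    simp only [Set.mem_setOf_eq, Set.mem_iUnion, Finset.mem_filter, Finset.mem_univ, true_and]
    constructor
    · intro hω
      exact ⟨fun i => ω (i : ℕ), hω, fun i => rfl⟩
    · rintro ⟨w, hw, hωw⟩
      have : (fun i : Fin n => ω (i : ℕ)) = w := funext fun i => hωw i
      rwa [this]
  constructor
  · rw [hrw]
    exact (Finset.univ.filter P).measurableSet_biUnion fun w _ => cyl_measurable S w
  · rw [hrw, measure_biUnion_finset ?_ fun w _ => cyl_measurable S w]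
    · rw [Finset.sum_congr rfl fun w (_ : w ∈ Finset.univ.filter P) => hμ.2 n w,
        Finset.sum_const, nsmul_eq_mul]
    · intro w hw w' hw' hne
      rw [Function.onFun, Set.disjoint_left]
      intro ω hω hω'
      refine hne (funext fun i => ?_)
      rw [← hω i, ← hω' i]

private lemma mem_submonoid_closure {G : Type*} [Group G] [Fintype G] (S : Finset G)
    (hgen : Subgroup.closure (S : Set G) = ⊤) (x : G) :
    x ∈ Submonoid.closure (S : Set G) := by
  set M := Submonoid.closure (S : Set G)
  have hinv : ∀ y ∈ M, y⁻¹ ∈ M := by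
    intro y hy
    induction hy using Submonoid.closure_induction with
    | mem s hs =>
        have ho : 0 < orderOf s := orderOf_pos s
        have h1 : s * s ^ (orderOf s - 1) = 1 := by
          rw [← pow_succ', show orderOf s - 1 + 1 = orderOf s by omega, pow_orderOf_eq_one]
        rw [inv_eq_of_mul_eq_one_right h1]
        exact Submonoid.pow_mem M (Submonoid.subset_closure hs) _
    | one => rw [inv_one]; exact M.one_mem
    | mul a b _ _ ha hb => rw [mul_inv_rev]; exact M.mul_mem hb ha
  let H : Subgroup G := { M with inv_mem' := fun {y} hy => hinv y hy }
  have hle : Subgroup.closure (S : Set G) ≤ H :=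
    (Subgroup.closure_le H).2 (fun s hs => Submonoid.subset_closure hs)
  have : x ∈ H := by rw [hgen] at hle; exact hle (Subgroup.mem_top x)
  exact this

private lemma reach {G : Type*} [Group G] [Fintype G] (S : Finset G)
    (hgen : Subgroup.closure (S : Set G) = ⊤) (s0 : S) (g x : G) (hx : x ≠ g) :
    ∃ n : ℕ, 0 < n ∧ ∃ w : Fin n → S, x * walk S (pad s0 w) n = g := by
  obtain ⟨l, hl, hprod⟩ := Submonoid.exists_list_of_mem_closure
    (mem_submonoid_closure S hgen (x⁻¹ * g))
  have hlne : l ≠ [] := by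
    rintro rfl
    rw [List.prod_nil] at hprod
    exact hx (inv_mul_eq_one.1 hprod.symm)
  set w : Fin l.length → S := fun i => ⟨l.get i, hl _ (List.get_mem l i)⟩ with hwdef
  refine ⟨l.length, List.length_pos_iff.2 hlne, w, ?_⟩
  have h : ∀ i : Fin l.length, ((pad s0 w (i : ℕ) : S) : G) = l.get i := by
    intro i
    rw [pad_lt s0 _ i.isLt]
  have hwalk : walk S (pad s0 w) l.length = l.prod := by
    unfold walk
    have h2 : (List.ofFn fun i : Fin l.length => ((pad s0 w (i : ℕ) : S) : G))
        = List.ofFn fun i : Fin l.length => l.get i := by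
      congr 1
      funext i
      exact h i
    rw [h2, List.ofFn_get]
  rw [hwalk, hprod, mul_inv_cancel_left]

end Auxiliary

open Matrix in
/-- closed-form matrix expression for the mean first passage time with unit
inter-arrival times: for `g ≠ 1`, the matrix `I − P_{[g]}` is invertible and
`d(g) = (P_{[g]} · (I − P_{[g]})⁻²)_{1,g}`. -/
theorem mfpt_matrix_formula {G : Type*} [Group G] [Fintype G] [DecidableEq G]
    (S : Finset G) (hgen : Subgroup.closure (S : Set G) = ⊤) (hone : (1 : G) ∉ S)
    (μ : Measure (ℕ → S)) (hμ : IsUniformProductMeasure S μ)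
    (g : G) (hg : g ≠ 1) :
    IsUnit (1 - absorb g (transMat S)) ∧
      mfpt S μ g =
        ENNReal.ofReal ((absorb g (transMat S) * ((1 - absorb g (transMat S))⁻¹) ^ 2) 1 g) := by
  classical
  have hg1 : (1 : G) ≠ g := fun h => hg h.symm
  have hnt : Nontrivial G := ⟨⟨g, 1, hg⟩⟩
  have hSne : S.Nonempty := by
    rcases S.eq_empty_or_nonempty with h | h
    · rw [h, Finset.coe_empty, Subgroup.closure_empty] at hgen
      exact absurd hgen bot_ne_top
    · exact h
  obtain ⟨s0v, hs0⟩ := hSne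
  set s0 : S := ⟨s0v, hs0⟩ with hs0def
  set Q := absorb g (transMat S) with hQdef
  set c : ℝ := (S.card : ℝ) with hcdef
  have hc0 : (0:ℝ) < c := by
    have h : 0 < S.card := Finset.card_pos.2 ⟨s0v, hs0⟩
    rw [hcdef]
    exact_mod_cast h
  -- nonnegativity of entries
  have hQnn : ∀ x z, 0 ≤ Q x z := by
    intro x z
    show (0:ℝ) ≤ absorb g (transMat S) x z
    unfold absorb transMat
    simp only [Matrix.of_apply]
    split_ifs <;> positivity
  have hQpnn : ∀ (n : ℕ) (x z : G), 0 ≤ (Q ^ n) x z := by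
    intro n
    induction n with
    | zero =>
        intro x z
        rw [pow_zero, Matrix.one_apply]
        split_ifs <;> norm_num
    | succ n ih =>
        intro x z
        rw [pow_succ, Matrix.mul_apply]
        exact Finset.sum_nonneg fun u _ => mul_nonneg (ih x u) (hQnn u z)
  -- basic vectors
  set vone : G → ℝ := fun _ => 1 with hvone
  set dg : G → ℝ := fun z => if z = g then 1 else 0 with hdg
  set vv : G → ℝ := fun z => if z = g then 0 else 1 with hvv
  -- row sum of transition part
  have hsum_ind : ∀ x : G, (∑ z : G, (if x⁻¹ * z ∈ S then c⁻¹ else 0)) = 1 := by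
    intro x
    have hvan : ∀ z ∈ Finset.univ, z ∉ S.image (fun s => x * s) →
        (if x⁻¹ * z ∈ S then c⁻¹ else 0) = 0 := by
      intro z _ hz
      exact if_neg fun hmem => hz (Finset.mem_image.2 ⟨x⁻¹ * z, hmem, mul_inv_cancel_left x z⟩)
    rw [← Finset.sum_subset (Finset.subset_univ _) hvan,
      Finset.sum_image (fun a _ b _ h => mul_left_cancel h)]
    have : ∀ s ∈ S, (if x⁻¹ * (x * s) ∈ S then c⁻¹ else 0) = c⁻¹ := by
      intro s hs
      rw [inv_mul_cancel_left]
      exact if_pos hs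
    rw [Finset.sum_congr rfl this, Finset.sum_const, nsmul_eq_mul]
    field_simp
    exact hcdef.symm
  have hQone : Q *ᵥ vone = vv := by
    funext x
    show (∑ z : G, Q x z * vone z) = vv x
    by_cases hx : x = g
    · have h0 : ∀ z ∈ Finset.univ, Q x z * vone z = 0 := by
        intro z _
        have hq : Q x z = 0 := if_pos hx
        rw [hq, zero_mul]
      rw [Finset.sum_congr rfl h0, Finset.sum_const, smul_zero]
      simp [hvv, hx]
    · have h1 : ∀ z ∈ Finset.univ, Q x z * vone z = (if x⁻¹ * z ∈ S then c⁻¹ else 0) := by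
        intro z _
        have : Q x z = if x⁻¹ * z ∈ S then c⁻¹ else 0 := by
          show absorb g (transMat S) x z = _
          unfold absorb transMat
          simp only [Matrix.of_apply]
          rw [if_neg hx]
        rw [this, hvone, mul_one]
      rw [Finset.sum_congr rfl h1, hsum_ind x]
      simp [hvv, hx]
  -- mulVec monotonicity & positivity for powers of Q
  have hmono : ∀ (n : ℕ) (u u' : G → ℝ), (∀ z, u z ≤ u' z) →
      ∀ x, ((Q ^ n) *ᵥ u) x ≤ ((Q ^ n) *ᵥ u') x := by
    intro n u u' hu x
    exact Finset.sum_le_sum fun z _ => mul_le_mul_of_nonneg_left (hu z) (hQpnn n x z)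
  have hnnvec : ∀ (n : ℕ) (u : G → ℝ), (∀ z, 0 ≤ u z) → ∀ x, 0 ≤ ((Q ^ n) *ᵥ u) x := by
    intro n u hu x
    exact Finset.sum_nonneg fun z _ => mul_nonneg (hQpnn n x z) (hu z)
  -- decreasing row sums
  have hstep : ∀ (n : ℕ) (x : G), ((Q ^ (n+1)) *ᵥ vone) x ≤ ((Q ^ n) *ᵥ vone) x := by
    intro n x
    have h1 : (Q ^ (n+1)) *ᵥ vone = (Q ^ n) *ᵥ (Q *ᵥ vone) := by
      rw [Matrix.mulVec_mulVec, ← pow_succ]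
    rw [h1, hQone]
    refine hmono n vv vone (fun z => ?_) x
    simp only [hvv, hvone]
    split_ifs <;> norm_num
  have hanti : ∀ (m n : ℕ), m ≤ n → ∀ x, ((Q ^ n) *ᵥ vone) x ≤ ((Q ^ m) *ᵥ vone) x := by
    intro m n hmn
    induction n, hmn using Nat.le_induction with
    | base => exact fun x => le_rfl
    | succ n hmn ih => exact fun x => (hstep n x).trans (ih x)
  have hrow1 : ∀ x, ((Q ^ 0) *ᵥ vone) x = 1 := by
    intro x
    rw [pow_zero, Matrix.one_mulVec]
  have hrow_le_one : ∀ (n : ℕ) (x : G), ((Q ^ n) *ᵥ vone) x ≤ 1 := by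
    intro n x
    have := hanti 0 n (Nat.zero_le n) x
    rwa [hrow1 x] at this
  -- choice of N
  have hreach' : ∀ x : G, ∃ n : ℕ, 0 < n ∧
      (x ≠ g → ∃ w : Fin n → S, x * walk S (pad s0 w) n = g) := by
    intro x
    by_cases hx : x = g
    · exact ⟨1, one_pos, fun h => absurd hx h⟩
    · obtain ⟨n, hn, hw⟩ := reach S hgen s0 g x hx
      exact ⟨n, hn, fun _ => hw⟩
  choose nx hnxpos hnxw using hreach'
  set N : ℕ := 1 + Finset.univ.sup nx with hNdef
  have hNpos : 0 < N := by omega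
  have hnxN : ∀ x, nx x < N := by
    intro x
    have := Finset.le_sup (f := nx) (Finset.mem_univ x)
    omega
  -- strict contraction at time N
  have hsN_lt : ∀ x, ((Q ^ N) *ᵥ vone) x < 1 := by
    intro x
    by_cases hx : x = g
    · rw [hx]
      have h0 : ((Q ^ N) *ᵥ vone) g = 0 := by
        show (∑ z : G, (Q ^ N) g z * vone z) = 0
        exact Finset.sum_eq_zero fun z _ => by
          rw [pow_absorb_row S g hNpos z, zero_mul]
      rw [h0]; norm_num
    · -- counting argument
      set Aset : Finset (Fin N → S) := Finset.univ.filter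
        (fun w : Fin N → S => ∀ k, 0 < k → k < N → x * walk S (pad s0 w) k ≠ g) with hAdef
      have hfib : (Aset.card : ℝ) = ∑ z : G, ((Fset S g s0 N x z).card : ℝ) := by
        rw [← Nat.cast_sum]
        congr 1
        rw [Finset.card_eq_sum_card_fiberwise
          (f := fun w : Fin N → S => x * walk S (pad s0 w) N)
          (t := Finset.univ) (fun w _ => Finset.mem_univ _)]
        refine Finset.sum_congr rfl fun z _ => ?_
        congr 1
        ext w
        rw [Finset.mem_filter, Finset.mem_filter, Fset, Finset.mem_filter]
        simp only [Finset.mem_univ, true_and]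
        try tauto
      have hcount : ((Q ^ N) *ᵥ vone) x * c ^ N = Aset.card := by
        show (∑ z : G, (Q ^ N) x z * vone z) * c ^ N = (Aset.card : ℝ)
        rw [hfib, Finset.sum_mul]
        refine Finset.sum_congr rfl fun z _ => ?_
        rw [hvone, mul_one, powEntry S g s0 N x z hx]
      -- a word that reaches g
      obtain ⟨w0, hw0⟩ := hnxw x hx
      set wbad : Fin N → S := fun i => if h : (i : ℕ) < nx x then w0 ⟨i, h⟩ else s0 with hwb
      have hbad : wbad ∉ Aset := by
        rw [hAdef, Finset.mem_filter]
        rintro ⟨-, hbad⟩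
        refine hbad (nx x) (hnxpos x) (hnxN x) ?_
        have : walk S (pad s0 wbad) (nx x) = walk S (pad s0 w0) (nx x) := by
          refine walk_congr S fun i hi => ?_
          have hiN : i < N := lt_trans hi (hnxN x)
          rw [pad_lt s0 _ hiN, pad_lt s0 _ hi, hwb]
          simp [hi]
        rw [this]
        exact hw0
      have hcard_lt : (Aset.card : ℝ) < c ^ N := by
        have h1 : Aset.card < Fintype.card (Fin N → S) :=
          Finset.card_lt_card ((Finset.ssubset_iff_of_subset (Finset.subset_univ _)).2
            ⟨wbad, Finset.mem_univ _, hbad⟩)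
        have h2 : Fintype.card (Fin N → S) = S.card ^ N := by
          rw [Fintype.card_fun, Fintype.card_coe, Fintype.card_fin]
        rw [h2] at h1
        calc (Aset.card : ℝ) < ((S.card ^ N : ℕ) : ℝ) := by exact_mod_cast h1
        _ = c ^ N := by push_cast [hcdef]; ring
      have hpow : (0:ℝ) < c ^ N := pow_pos hc0 N
      nlinarith [hcount]
  -- spectral bound
  have hGne : (Finset.univ : Finset G).Nonempty := ⟨1, Finset.mem_univ 1⟩
  set ρ : ℝ := Finset.univ.sup' hGne (fun x => ((Q ^ N) *ᵥ vone) x) with hρdef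
  have hρlt : ρ < 1 := (Finset.sup'_lt_iff hGne).2 fun x _ => hsN_lt x
  have hρge : ∀ x, ((Q ^ N) *ᵥ vone) x ≤ ρ := fun x => Finset.le_sup' _ (Finset.mem_univ x)
  have hρ0 : 0 ≤ ρ :=
    le_trans (hnnvec N vone (fun _ => zero_le_one) 1) (hρge 1)
  -- geometric decay
  have hdecayk : ∀ (k : ℕ) (x : G), ((Q ^ (k * N)) *ᵥ vone) x ≤ ρ ^ k := by
    intro k
    induction k with
    | zero => intro x; rw [zero_mul, hrow1 x, pow_zero]
    | succ k ih =>
        intro x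
        have h1 : (Q ^ ((k+1) * N)) *ᵥ vone = (Q ^ (k * N)) *ᵥ ((Q ^ N) *ᵥ vone) := by
          rw [Matrix.mulVec_mulVec, ← pow_add]
          congr 2
          ring
        rw [h1]
        have h2 : ((Q ^ (k * N)) *ᵥ ((Q ^ N) *ᵥ vone)) x
            ≤ ((Q ^ (k * N)) *ᵥ (fun _ => ρ)) x := hmono (k * N) _ _ hρge x
        have h3 : ((Q ^ (k * N)) *ᵥ (fun _ => ρ)) x = ((Q ^ (k * N)) *ᵥ vone) x * ρ := by
          show (∑ z : G, (Q ^ (k*N)) x z * ρ) = (∑ z : G, (Q ^ (k*N)) x z * vone z) * ρ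
          rw [Finset.sum_mul]
          exact Finset.sum_congr rfl fun z _ => by simp only [hvone, mul_one]
        calc ((Q ^ (k * N)) *ᵥ ((Q ^ N) *ᵥ vone)) x ≤ ((Q ^ (k * N)) *ᵥ vone) x * ρ := by
              rw [← h3]; exact h2
        _ ≤ ρ ^ k * ρ := mul_le_mul_of_nonneg_right (ih x) hρ0
        _ = ρ ^ (k + 1) := by ring
  have hdecay : ∀ (n : ℕ) (x : G), ((Q ^ n) *ᵥ vone) x ≤ ρ ^ (n / N) := by
    intro n x
    have h1 : (n / N) * N ≤ n := Nat.div_mul_le_self n N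
    exact le_trans (hanti _ _ h1 x) (hdecayk (n / N) x)
  -- invertibility
  have hdet : (1 - Q).det ≠ 0 := by
    intro h0
    obtain ⟨xv, hx0, hxv⟩ := Matrix.exists_mulVec_eq_zero_iff.2 h0
    have hfix : Q *ᵥ xv = xv := by
      have h1 : (1 - Q) *ᵥ xv = 1 *ᵥ xv - Q *ᵥ xv := Matrix.sub_mulVec 1 Q xv
      rw [hxv, Matrix.one_mulVec] at h1
      exact (sub_eq_zero.1 h1.symm).symm
    have hfixn : ∀ n : ℕ, (Q ^ n) *ᵥ xv = xv := by
      intro n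
      induction n with
      | zero => rw [pow_zero, Matrix.one_mulVec]
      | succ n ih =>
          rw [pow_succ', ← Matrix.mulVec_mulVec, ih, hfix]
    obtain ⟨i, -, hi⟩ := Finset.exists_mem_eq_sup' hGne (fun j => |xv j|)
    have hge : ∀ j, |xv j| ≤ |xv i| := fun j => by
      rw [← hi]
      exact Finset.le_sup' (f := fun j => |xv j|) (Finset.mem_univ j)
    have hipos : 0 < |xv i| := by
      obtain ⟨j, hj⟩ := Function.ne_iff.1 hx0
      exact lt_of_lt_of_le (abs_pos.2 hj) (hge j)
    have hest : |xv i| ≤ ρ * |xv i| := by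
      conv_lhs => rw [← hfixn N]
      calc |((Q ^ N) *ᵥ xv) i| = |∑ z : G, (Q ^ N) i z * xv z| := rfl
      _ ≤ ∑ z : G, |(Q ^ N) i z * xv z| := Finset.abs_sum_le_sum_abs _ _
      _ = ∑ z : G, (Q ^ N) i z * |xv z| := by
          refine Finset.sum_congr rfl fun z _ => ?_
          rw [abs_mul, abs_of_nonneg (hQpnn N i z)]
      _ ≤ ∑ z : G, (Q ^ N) i z * |xv i| := Finset.sum_le_sum fun z _ =>
          mul_le_mul_of_nonneg_left (hge z) (hQpnn N i z)
      _ = ((Q ^ N) *ᵥ vone) i * |xv i| := by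
          show _ = (∑ z : G, (Q ^ N) i z * vone z) * |xv i|
          rw [Finset.sum_mul]
          exact Finset.sum_congr rfl fun z _ => by simp only [hvone, mul_one]
      _ ≤ ρ * |xv i| := mul_le_mul_of_nonneg_right (hρge i) (abs_nonneg _)
    nlinarith
  have hUnit : IsUnit (1 - Q) := (Matrix.isUnit_iff_isUnit_det _).2 (Ne.isUnit hdet)
  set B := (1 - Q)⁻¹ with hBdef
  have hdetU : IsUnit (1 - Q).det := (Matrix.isUnit_iff_isUnit_det _).1 hUnit
  have hBl : B * (1 - Q) = 1 := Matrix.nonsing_inv_mul _ hdetU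
  have hBr : (1 - Q) * B = 1 := Matrix.mul_nonsing_inv _ hdetU
  have hcomm : Q * B = B * Q := by
    have h1 : (1 - Q) * Q = Q * (1 - Q) := by
      rw [sub_mul, mul_sub, one_mul, mul_one]
    calc Q * B = 1 * (Q * B) := (one_mul _).symm
    _ = (B * (1 - Q)) * (Q * B) := by rw [hBl]
    _ = B * ((1 - Q) * Q * B) := by rw [mul_assoc, ← mul_assoc (1 - Q) Q B]
    _ = B * (Q * (1 - Q) * B) := by rw [h1]
    _ = B * Q := by rw [mul_assoc Q (1 - Q) B, hBr, mul_one]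
  have h1Qone : (1 - Q) *ᵥ vone = dg := by
    rw [Matrix.sub_mulVec, Matrix.one_mulVec, hQone]
    funext x
    show vone x - vv x = dg x
    simp only [hvone, hvv, hdg]
    split_ifs <;> norm_num
  have hBdg : B *ᵥ dg = vone := by
    rw [← h1Qone, Matrix.mulVec_mulVec, hBl, Matrix.one_mulVec]
  have hentry : ∀ (M : Matrix G G ℝ) (x : G), (M *ᵥ dg) x = M x g := by
    intro M x
    show (∑ z : G, M x z * dg z) = M x g
    simp only [hdg, mul_ite, mul_one, mul_zero]
    exact Finset.sum_ite_eq' Finset.univ g (fun z => M x z) |>.trans (if_pos (Finset.mem_univ g))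
  have htarget : (Q * B ^ 2) 1 g = (B *ᵥ vv) 1 := by
    have h2 : (Q * B ^ 2) *ᵥ dg = B *ᵥ vv := by
      rw [pow_two]
      calc (Q * (B * B)) *ᵥ dg = Q *ᵥ (B *ᵥ (B *ᵥ dg)) := by
            rw [Matrix.mulVec_mulVec, Matrix.mulVec_mulVec, mul_assoc]
      _ = Q *ᵥ (B *ᵥ vone) := by rw [hBdg]
      _ = (Q * B) *ᵥ vone := Matrix.mulVec_mulVec vone Q B
      _ = (B * Q) *ᵥ vone := by rw [hcomm]
      _ = B *ᵥ (Q *ᵥ vone) := (Matrix.mulVec_mulVec vone B Q).symm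
      _ = B *ᵥ vv := by rw [hQone]
    rw [← hentry (Q * B ^ 2) 1, h2]
  -- the series
  set t : ℕ → ℝ := fun n => ((Q ^ n) *ᵥ vv) 1 with htdef
  have hvvnn : ∀ z, 0 ≤ vv z := fun z => by simp only [hvv]; split_ifs <;> norm_num
  have hvvle : ∀ z, vv z ≤ vone z := fun z => by
    simp only [hvv, hvone]; split_ifs <;> norm_num
  have htnn : ∀ n, 0 ≤ t n := fun n => hnnvec n vv hvvnn 1
  have hgeom : ∀ m : ℕ, (∑ n ∈ Finset.range m, Q ^ n) = B - B * Q ^ m := by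
    intro m
    have h3 : (1 - Q) * (∑ n ∈ Finset.range m, Q ^ n) = 1 - Q ^ m := by
      have h4 := mul_geom_sum Q m
      calc (1 - Q) * (∑ n ∈ Finset.range m, Q ^ n)
          = -((Q - 1) * ∑ n ∈ Finset.range m, Q ^ n) := by rw [← neg_sub Q 1, neg_mul]
      _ = -(Q ^ m - 1) := by rw [h4]
      _ = 1 - Q ^ m := neg_sub _ _
    calc (∑ n ∈ Finset.range m, Q ^ n)
        = 1 * (∑ n ∈ Finset.range m, Q ^ n) := (one_mul _).symm
    _ = (B * (1 - Q)) * (∑ n ∈ Finset.range m, Q ^ n) := by rw [hBl]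
    _ = B * ((1 - Q) * (∑ n ∈ Finset.range m, Q ^ n)) := mul_assoc _ _ _
    _ = B * (1 - Q ^ m) := by rw [h3]
    _ = B - B * Q ^ m := by rw [mul_sub, mul_one]
  have hpartial : ∀ m : ℕ, (∑ n ∈ Finset.range m, t n)
      = (B *ᵥ vv) 1 - ((B * Q ^ m) *ᵥ vv) 1 := by
    intro m
    have h5 : (∑ n ∈ Finset.range m, t n) = ((∑ n ∈ Finset.range m, Q ^ n) *ᵥ vv) 1 := by
      have hL : ∀ n : ℕ, t n = ∑ z : G, (Q ^ n) 1 z * vv z := fun n => rfl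
      have hR : ((∑ n ∈ Finset.range m, Q ^ n) *ᵥ vv) 1
          = ∑ z : G, (∑ n ∈ Finset.range m, (Q ^ n) 1 z) * vv z := by
        show (∑ z : G, (∑ n ∈ Finset.range m, Q ^ n) 1 z * vv z) = _
        refine Finset.sum_congr rfl fun z _ => ?_
        congr 1
        exact Matrix.sum_apply 1 z (Finset.range m) (fun n => Q ^ n)
      rw [hR, Finset.sum_congr rfl fun n (_ : n ∈ Finset.range m) => hL n, Finset.sum_comm]
      refine Finset.sum_congr rfl fun z _ => ?_
      rw [Finset.sum_mul]
    rw [h5, hgeom m, Matrix.sub_mulVec]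
    rfl
  set C : ℝ := ∑ z : G, |B 1 z| with hCdef
  have herr : ∀ m : ℕ, |((B * Q ^ m) *ᵥ vv) 1| ≤ C * ρ ^ (m / N) := by
    intro m
    have hQmv : ∀ z, |((Q ^ m) *ᵥ vv) z| ≤ ρ ^ (m / N) := by
      intro z
      rw [abs_of_nonneg (hnnvec m vv hvvnn z)]
      exact le_trans (hmono m vv vone hvvle z) (hdecay m z)
    have h7 : ((B * Q ^ m) *ᵥ vv) 1 = ∑ z : G, B 1 z * ((Q ^ m) *ᵥ vv) z := by
      rw [← Matrix.mulVec_mulVec]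
      rfl
    rw [h7]
    calc |∑ z : G, B 1 z * ((Q ^ m) *ᵥ vv) z| ≤ ∑ z : G, |B 1 z * ((Q ^ m) *ᵥ vv) z| :=
          Finset.abs_sum_le_sum_abs _ _
    _ = ∑ z : G, |B 1 z| * |((Q ^ m) *ᵥ vv) z| := by
        exact Finset.sum_congr rfl fun z _ => abs_mul _ _
    _ ≤ ∑ z : G, |B 1 z| * ρ ^ (m / N) := Finset.sum_le_sum fun z _ =>
        mul_le_mul_of_nonneg_left (hQmv z) (abs_nonneg _)
    _ = C * ρ ^ (m / N) := by rw [hCdef, Finset.sum_mul]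
  have hρtend : Filter.Tendsto (fun m : ℕ => ρ ^ (m / N)) Filter.atTop (nhds 0) := by
    have h1 : Filter.Tendsto (fun k : ℕ => ρ ^ k) Filter.atTop (nhds 0) := by
      refine tendsto_pow_atTop_nhds_zero_of_lt_one hρ0 hρlt
    have h2 : Filter.Tendsto (fun m : ℕ => m / N) Filter.atTop Filter.atTop := by
      refine Filter.tendsto_atTop_atTop.2 fun b => ⟨N * b, fun m hm => ?_⟩
      rw [Nat.le_div_iff_mul_le hNpos]
      calc b * N = N * b := mul_comm b N
      _ ≤ m := hm
    exact h1.comp h2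
  have herrtend : Filter.Tendsto (fun m : ℕ => ((B * Q ^ m) *ᵥ vv) 1)
      Filter.atTop (nhds 0) := by
    refine squeeze_zero_norm (a := fun m => C * ρ ^ (m / N)) (fun m => ?_) ?_
    · exact (Real.norm_eq_abs _).trans_le (herr m)
    · have := hρtend.const_mul C
      rwa [mul_zero] at this
  have hsum : HasSum t ((B *ᵥ vv) 1) := by
    rw [hasSum_iff_tendsto_nat_of_nonneg htnn]
    have h8 : (fun m : ℕ => ∑ n ∈ Finset.range m, t n)
        = fun m : ℕ => (B *ᵥ vv) 1 - ((B * Q ^ m) *ᵥ vv) 1 := funext hpartial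
    rw [h8]
    have := Filter.Tendsto.sub (tendsto_const_nhds (x := (B *ᵥ vv) 1)
      (f := Filter.atTop (α := ℕ))) herrtend
    rwa [sub_zero] at this
  -- measure of the tail events
  have hww : ∀ (n : ℕ) (ω : ℕ → S) (k : ℕ), k ≤ n →
      walk S (pad s0 (fun i : Fin n => ω (i : ℕ))) k = walk S ω k := by
    intro n ω k hk
    refine walk_congr S fun i hik => ?_
    rw [pad_lt s0 _ (lt_of_lt_of_le hik hk)]
  have hmeasE : ∀ n : ℕ, MeasurableSet {ω : ℕ → S | (n : ℕ∞) < tau S g ω} ∧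
      μ {ω : ℕ → S | (n : ℕ∞) < tau S g ω} = ENNReal.ofReal (t n) := by
    intro n
    set P : (Fin n → S) → Prop := fun w => ∀ k ≤ n, walk S (pad s0 w) k ≠ g with hPdef
    have hset : {ω : ℕ → S | (n : ℕ∞) < tau S g ω}
        = {ω : ℕ → S | P (fun i => ω (i : ℕ))} := by
      ext ω
      rw [Set.mem_setOf_eq, Set.mem_setOf_eq, tau_gt_iff]
      constructor
      · intro h k hk
        rw [hww n ω k hk]
        exact h k hk
      · intro h k hk
        have := h k hk
        rwa [hww n ω k hk] at this
    obtain ⟨hms, hmeq⟩ := meas_dep S hμ n P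
    have hcardP : ((Finset.univ.filter P).card : ℝ) = t n * c ^ n := by
      have hfib2 : (Finset.univ.filter P).card
          = ∑ z : G, ((Finset.univ.filter P).filter
              (fun w : Fin n → S => walk S (pad s0 w) n = z)).card := by
        exact Finset.card_eq_sum_card_fiberwise
          (f := fun w : Fin n → S => walk S (pad s0 w) n)
          (t := Finset.univ) (fun w _ => Finset.mem_univ _)
      have hfibz : ∀ z : G, ((Finset.univ.filter P).filter
          (fun w : Fin n → S => walk S (pad s0 w) n = z))
          = if z = g then ∅ else Fset S g s0 n 1 z := by
        intro z
        by_cases hzg : z = g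
        · subst hzg
          rw [if_pos rfl]
          ext w
          simp only [Finset.mem_filter, Finset.notMem_empty, iff_false, not_and, hPdef]
          intro hw hwz
          exact absurd hwz (hw.2 n le_rfl)
        · rw [if_neg hzg]
          ext w
          rw [Finset.mem_filter, Finset.mem_filter, Fset, Finset.mem_filter]
          simp only [Finset.mem_univ, true_and, one_mul, hPdef]
          constructor
          · rintro ⟨h1, h2⟩
            exact ⟨fun k _ hk => h1 k hk.le, h2⟩
          · rintro ⟨h1, h2⟩
            refine ⟨fun k hk => ?_, h2⟩
            rcases Nat.eq_zero_or_pos k with h0 | hkp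
            · subst h0; rw [walk_zero]; exact hg1
            · rcases lt_or_eq_of_le hk with hlt | heq
              · exact h1 k hkp hlt
              · subst heq; rw [h2]; exact hzg
      have ht' : t n * c ^ n = ∑ z : G, (if z = g then 0 else ((Fset S g s0 n 1 z).card : ℝ)) := by
        rw [htdef]
        show (∑ z : G, (Q ^ n) 1 z * vv z) * c ^ n = _
        rw [Finset.sum_mul]
        refine Finset.sum_congr rfl fun z _ => ?_
        simp only [hvv]
        by_cases hzg : z = g
        · simp [hzg]
        · rw [if_neg hzg, if_neg hzg, mul_one, ← powEntry S g s0 n 1 z hg1]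
      rw [hfib2, Nat.cast_sum, ht']
      refine Finset.sum_congr rfl fun z _ => ?_
      rw [hfibz z]
      by_cases hzg : z = g <;> simp [hzg]
    have hofr : ((Finset.univ.filter P).card : ℝ≥0∞) * ((S.card : ℝ≥0∞))⁻¹ ^ n
        = ENNReal.ofReal (t n) := by
      have ht2 : t n = ((Finset.univ.filter P).card : ℝ) / c ^ n := by
        rw [hcardP]
        field_simp
      rw [ht2, ENNReal.ofReal_div_of_pos (pow_pos hc0 n), ENNReal.ofReal_natCast,
        hcdef, ENNReal.ofReal_pow hc0.le, ENNReal.ofReal_natCast,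
        div_eq_mul_inv, ENNReal.inv_pow]
    constructor
    · rw [hset]; exact hms
    · rw [hset, hmeq, ← hofr]
      congr!
  -- the lintegral computation
  have hmfpt : mfpt S μ g = ∑' n : ℕ, μ {ω : ℕ → S | (n : ℕ∞) < tau S g ω} := by
    rw [mfpt]
    have hpt : ∀ ω : ℕ → S, ((tau S g ω : ℕ∞) : ℝ≥0∞)
        = ∑' n : ℕ, (if (n : ℕ∞) < tau S g ω then (1 : ℝ≥0∞) else 0) := fun ω =>
      enat_cast_tsum _
    rw [lintegral_congr hpt]
    have hind : ∀ n : ℕ, (fun ω : ℕ → S => if (n : ℕ∞) < tau S g ω then (1 : ℝ≥0∞) else 0)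
        = Set.indicator {ω : ℕ → S | (n : ℕ∞) < tau S g ω} (fun _ => 1) := by
      intro n
      funext ω
      rw [Set.indicator_apply]
      rfl
    rw [lintegral_tsum fun n => by
      rw [hind n]
      exact (Measurable.indicator measurable_const (hmeasE n).1).aemeasurable]
    refine tsum_congr fun n => ?_
    rw [hind n]
    exact lintegral_indicator_one (hmeasE n).1
  have hfinal : mfpt S μ g = ENNReal.ofReal ((B *ᵥ vv) 1) := by
    rw [hmfpt, tsum_congr fun n => (hmeasE n).2,
      ← ENNReal.ofReal_tsum_of_nonneg htnn hsum.summable, hsum.tsum_eq]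
  exact ⟨hUnit, by rw [hfinal, htarget]⟩
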